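/- arXiv:1505.03047 — 2 statements merged into one kernel-verified Lean document; each statement's English description precedes it below -/
import Mathlib

section
/- Let μ > 0 and F ∈ ℝ³. Define the 3D Stokeslet velocity u_δ(x) = (1/(8πμ))·(F/|x| + ((x·F)/|x|³)·x) and pressure p_δ(x) = (1/(4π))·(x·F)/|x|³ for x ∈ ℝ³ \ {0}. Then for every x ∈ ℝ³ with x ≠ 0, the pair (u_δ, p_δ) satisfies the homogeneous Stokes equation pointwise: μ·Δu_δ(x) = ∇p_δ(x), where Δ acts componentwise on the vector field u_δ. -/
/-!
Away from the origin `u_δ` is `N / |x|³` with `N_j = F_j |x|² + (x·F) x_j` a polynomial, and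
`∂ᵢ (N / |x|ᵏ) = (∂ᵢ N · |x|² - k N xᵢ) / |x|ᵏ⁺²` keeps every derivative in this form. Two such steps
give `∂ᵢ² u_j`; summing over `i`, with `∑ᵢ xᵢ² = |x|²`, yields
`μ Δu_j = (F_j |x|² - 3 (x·F) x_j) / (4π |x|⁵)`, which is also `∂_j p_δ`.
-/

open Real MeasureTheory

noncomputable section

/-- Euclidean inner product on `Fin d → ℝ`. -/
def dot {d : ℕ} (x y : Fin d → ℝ) : ℝ := ∑ i, x i * y i

/-- Euclidean norm on `Fin d → ℝ`. -/
def eunorm {d : ℕ} (x : Fin d → ℝ) : ℝ := Real.sqrt (∑ i, (x i) ^ 2)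

/-- `i`-th partial derivative of a scalar field. -/
def pd {d : ℕ} (i : Fin d) (f : (Fin d → ℝ) → ℝ) (x : Fin d → ℝ) : ℝ :=
  fderiv ℝ f x (Pi.single i 1)

/-- Laplacian (sum of second partial derivatives) of a scalar field. -/
def lap {d : ℕ} (f : (Fin d → ℝ) → ℝ) (x : Fin d → ℝ) : ℝ :=
  ∑ i, pd i (fun y => pd i f y) x

/-- Divergence of a vector field. -/
def divg {d : ℕ} (u : (Fin d → ℝ) → (Fin d → ℝ)) (x : Fin d → ℝ) : ℝ :=
  ∑ i, pd i (fun y => u y i) x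

/-- 3D Stokeslet velocity. -/
def udelta3 (μ : ℝ) (F : Fin 3 → ℝ) (x : Fin 3 → ℝ) : Fin 3 → ℝ :=
  fun j => (1 / (8 * π * μ)) *
    (F j / eunorm x + (dot x F / (eunorm x) ^ 3) * x j)

/-- 3D Stokeslet pressure. -/
def pdelta3 (F : Fin 3 → ℝ) (x : Fin 3 → ℝ) : ℝ :=
  (1 / (4 * π)) * (dot x F / (eunorm x) ^ 3)

section PartialDerivative

variable {d : ℕ} {f g : (Fin d → ℝ) → ℝ} {x : Fin d → ℝ} (i : Fin d)

theorem HasFDerivAt.pd_eq {f' : (Fin d → ℝ) →L[ℝ] ℝ} (h : HasFDerivAt f f' x) :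
    pd i f x = f' (Pi.single i 1) := by
  rw [pd, h.fderiv]

theorem Filter.EventuallyEq.pd_eq (h : f =ᶠ[nhds x] g) : pd i f x = pd i g x := by
  rw [pd, pd, h.fderiv_eq]

theorem pd_const (c : ℝ) : pd i (fun _ => c) x = 0 := by
  simp [pd]

theorem pd_apply (j : Fin d) : pd i (fun y => y j) x = if i = j then 1 else 0 := by
  simp [(hasFDerivAt_apply j x).pd_eq, Pi.single_apply, eq_comm]

theorem pd_add (hf : DifferentiableAt ℝ f x) (hg : DifferentiableAt ℝ g x) :
    pd i (fun y => f y + g y) x = pd i f x + pd i g x := by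
  simp [pd, fderiv_fun_add hf hg]

theorem pd_sub (hf : DifferentiableAt ℝ f x) (hg : DifferentiableAt ℝ g x) :
    pd i (fun y => f y - g y) x = pd i f x - pd i g x := by
  simp [pd, fderiv_fun_sub hf hg]

theorem pd_mul (hf : DifferentiableAt ℝ f x) (hg : DifferentiableAt ℝ g x) :
    pd i (fun y => f y * g y) x = pd i f x * g x + f x * pd i g x := by
  simp [pd, fderiv_fun_mul hf hg]
  ring

theorem pd_pow (n : ℕ) (hf : DifferentiableAt ℝ f x) :
    pd i (fun y => f y ^ n) x = n * f x ^ (n - 1) * pd i f x := by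
  simp [pd, fderiv_fun_pow n hf]

theorem pd_inv (hg : DifferentiableAt ℝ g x) (hx : g x ≠ 0) :
    pd i (fun y => (g y)⁻¹) x = -pd i g x / g x ^ 2 := by
  have h : HasFDerivAt (fun y => (g y)⁻¹) _ x :=
    (hasDerivAt_inv hx).comp_hasFDerivAt x hg.hasFDerivAt
  rw [h.pd_eq, pd]
  simp
  ring

theorem hasFDerivAt_sum_sq (x : Fin d → ℝ) :
    HasFDerivAt (fun y : Fin d → ℝ => ∑ k, y k ^ 2)
      (∑ k, (2 * x k) • ContinuousLinearMap.proj (R := ℝ) (φ := fun _ : Fin d => ℝ) k) x := by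
  refine HasFDerivAt.fun_sum fun k _ => ?_
  simpa using (hasFDerivAt_apply (𝕜 := ℝ) k x).pow 2

theorem pd_sum_sq : pd i (fun y => ∑ k, y k ^ 2) x = 2 * x i := by
  simp [(hasFDerivAt_sum_sq x).pd_eq, Pi.single_apply]

@[fun_prop]
theorem differentiable_dot_left (F : Fin d → ℝ) : Differentiable ℝ (fun y => dot y F) := by
  unfold dot
  fun_prop

theorem pd_dot_left (F : Fin d → ℝ) : pd i (fun y => dot y F) x = F i := by
  have h : HasFDerivAt (fun y => dot y F)
      (∑ k, F k • ContinuousLinearMap.proj (R := ℝ) (φ := fun _ : Fin d => ℝ) k) x :=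
    HasFDerivAt.fun_sum fun k _ => by
      simpa [mul_comm] using (hasFDerivAt_apply k x).const_mul (F k)
  simp [h.pd_eq, Pi.single_apply]

theorem sum_sq_pos (hx : x ≠ 0) : 0 < ∑ k, x k ^ 2 := by
  obtain ⟨k, hk⟩ := Function.ne_iff.1 hx
  exact Finset.sum_pos' (fun _ _ => sq_nonneg _)
    ⟨k, Finset.mem_univ k, by simpa [sq_pos_iff] using hk⟩

theorem eunorm_pos (hx : x ≠ 0) : 0 < eunorm x :=
  Real.sqrt_pos.2 (sum_sq_pos hx)

theorem eunorm_sq : eunorm x ^ 2 = ∑ k, x k ^ 2 :=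
  Real.sq_sqrt (by positivity)

theorem differentiableAt_eunorm (hx : x ≠ 0) : DifferentiableAt ℝ eunorm x :=
  ((hasFDerivAt_sum_sq x).sqrt (sum_sq_pos hx).ne').differentiableAt

theorem pd_eunorm (hx : x ≠ 0) : pd i eunorm x = x i / eunorm x := by
  have h : HasFDerivAt eunorm _ x := (hasFDerivAt_sum_sq x).sqrt (sum_sq_pos hx).ne'
  simp [h.pd_eq, Pi.single_apply, eunorm]
  field_simp

theorem pd_div_eunorm_pow (k : ℕ) (hf : DifferentiableAt ℝ f x) (hx : x ≠ 0) :
    pd i (fun y => f y / eunorm y ^ k) x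
      = (pd i f x * eunorm x ^ 2 - k * f x * x i) / eunorm x ^ (k + 2) := by
  have hr := differentiableAt_eunorm hx
  have hr0 := (eunorm_pos hx).ne'
  have hrk : DifferentiableAt ℝ (fun y => eunorm y ^ k) x := hr.pow k
  simp only [div_eq_mul_inv]
  rw [pd_mul i hf (hrk.fun_inv (by positivity)), pd_inv i hrk (by positivity),
    pd_pow i k hr, pd_eunorm i hx]
  rcases k with _ | k
  · field_simp
    ring
  · simp only [Nat.add_sub_cancel]
    field_simp
    ring

end PartialDerivative

section Stokeslet

variable (μ : ℝ) (F : Fin 3 → ℝ) {x : Fin 3 → ℝ}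

theorem udelta3_eq_div (j : Fin 3) (hx : x ≠ 0) :
    udelta3 μ F x j = (8 * π * μ)⁻¹ * (F j * ∑ k, x k ^ 2 + dot x F * x j) / eunorm x ^ 3 := by
  have hr := (eunorm_pos hx).ne'
  rw [udelta3, ← eunorm_sq]
  field_simp

-- The Kronecker delta stays a constant factor so that `fun_prop` can differentiate this again.
theorem pd_udelta3 (i j : Fin 3) (hx : x ≠ 0) :
    pd i (fun y => udelta3 μ F y j) x = (8 * π * μ)⁻¹ *
      ((2 * F j * x i + F i * x j + (if i = j then 1 else 0) * dot x F) * ∑ k, x k ^ 2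
        - 3 * (F j * ∑ k, x k ^ 2 + dot x F * x j) * x i) / eunorm x ^ 5 := by
  rw [Filter.EventuallyEq.pd_eq i ((eventually_ne_nhds hx).mono fun y hy => udelta3_eq_div μ F j hy),
    pd_div_eunorm_pow i 3 (by fun_prop) hx, eunorm_sq]
  simp (disch := fun_prop) only [pd_const, pd_apply, pd_add, pd_mul, pd_sum_sq, pd_dot_left]
  split_ifs <;> ring

theorem pd_pd_udelta3 (i j : Fin 3) (hx : x ≠ 0) :
    pd i (fun y => pd i (fun z => udelta3 μ F z j) y) x = (8 * π * μ)⁻¹ *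
      ((2 * F j + 2 * (if i = j then 1 else 0) * F i) * (∑ k, x k ^ 2) ^ 2
        - 6 * (2 * F j * x i + F i * x j + (if i = j then 1 else 0) * dot x F) * x i * ∑ k, x k ^ 2
        - 3 * (F j * ∑ k, x k ^ 2 + dot x F * x j) * ∑ k, x k ^ 2
        + 15 * (F j * ∑ k, x k ^ 2 + dot x F * x j) * x i ^ 2) / eunorm x ^ 7 := by
  rw [Filter.EventuallyEq.pd_eq i ((eventually_ne_nhds hx).mono fun y hy => pd_udelta3 μ F i j hy),
    pd_div_eunorm_pow i 5 (by fun_prop) hx, eunorm_sq]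
  simp (disch := fun_prop) only [pd_const, pd_apply, pd_add, pd_sub, pd_mul, pd_sum_sq, pd_dot_left]
  split_ifs <;> ring

theorem lap_udelta3 (j : Fin 3) (hx : x ≠ 0) :
    lap (fun y => udelta3 μ F y j) x
      = (4 * π * μ)⁻¹ * (F j * ∑ k, x k ^ 2 - 3 * dot x F * x j) / eunorm x ^ 5 := by
  have h7 : eunorm x ^ 7 = eunorm x ^ 5 * ∑ k, x k ^ 2 := by
    rw [← eunorm_sq]
    ring
  have hS := sum_sq_pos hx
  simp only [lap, pd_pd_udelta3 μ F _ j hx, h7, Fin.sum_univ_three, dot] at hS ⊢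
  field_simp
  fin_cases j <;> simp <;> ring

theorem pd_pdelta3 (j : Fin 3) (hx : x ≠ 0) :
    pd j (pdelta3 F) x = (4 * π)⁻¹ * (F j * ∑ k, x k ^ 2 - 3 * dot x F * x j) / eunorm x ^ 5 := by
  have hp : pdelta3 F = fun y => (4 * π)⁻¹ * dot y F / eunorm y ^ 3 := by
    ext y
    rw [pdelta3, one_div, mul_div_assoc]
  rw [hp, pd_div_eunorm_pow j 3 (by fun_prop) hx, eunorm_sq]
  simp (disch := fun_prop) only [pd_const, pd_mul, pd_dot_left]
  ring

end Stokeslet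

/-- The 3D Stokeslet satisfies the homogeneous Stokes equation `μ Δu = ∇p`
pointwise away from the origin. -/
theorem stokeslet3d_stokes_eq (μ : ℝ) (hμ : 0 < μ) (F : Fin 3 → ℝ)
    (x : Fin 3 → ℝ) (hx : x ≠ 0) :
    ∀ j : Fin 3, μ * lap (fun y => udelta3 μ F y j) x = pd j (pdelta3 F) x := by
  intro j
  rw [lap_udelta3 μ F j hx, pd_pdelta3 F j hx]
  field_simp
end
end

section
/- Let μ > 0, F ∈ ℝ³, and 0 < a < b. Let u_δ(x) = (1/(8πμ))·(F/|x| + ((x·F)/|x|³)·x) be the 3D Stokeslet velocity, and let χ̃(x) = χ(|x|) with χ(r) = (2r³ − 3(a+b)r² + 6abr + b²(b−3a))/(b−a)³ for a ≤ r ≤ b. Then for every x ∈ ℝ³ with a < |x| < b, writing r = |x|: div(χ̃·u_δ)(x) = [3(r² − (a+b)r + ab) / (2πμ(b−a)³ r²)] · (x·F). -/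
/-!
On the annulus the truncated field is `α(|y|) F + β(|y|) (y·F) y` with `α = Cχ/r`, `β = Cχ/r³`
and `C = 1/(8πμ)`. In dimension `d` every field of this shape has divergence
`(x·F) (α'/r + r β' + (d+1) β)` at `x`. For `d = 3` and these `α, β` the terms in `χ` cancel
(the Stokeslet is divergence free), leaving `2 C χ'(r) (x·F) / r²` with
`χ'(r) = 6 (r - a)(r - b) / (b - a)³`.
-/

open Real MeasureTheory

noncomputable section

/-- The radial cubic cutoff profile: `1` for `r ≤ a`, a cubic polynomial on `[a, b]`,
and `0` for `r ≥ b`. -/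
def cutoff (a b r : ℝ) : ℝ :=
  if r ≤ a then 1
  else if r ≤ b then
    (2 * r ^ 3 - 3 * (a + b) * r ^ 2 + 6 * a * b * r + b ^ 2 * (b - 3 * a)) / (b - a) ^ 3
  else 0

section RadialFields

variable {d : ℕ}

def dotCLM (v : Fin d → ℝ) : (Fin d → ℝ) →L[ℝ] ℝ := ∑ k, v k • ContinuousLinearMap.proj k

lemma dotCLM_apply (v w : Fin d → ℝ) : dotCLM v w = dot w v := by
  simp [dotCLM, dot, mul_comm]

lemma single_dot (i : Fin d) (v : Fin d → ℝ) : dot (Pi.single i 1) v = v i := by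
  simp [dot, Pi.single_apply]

lemma eunorm_nonneg (x : Fin d → ℝ) : 0 ≤ eunorm x := Real.sqrt_nonneg _

lemma eunorm_sq_s11 (x : Fin d → ℝ) : eunorm x ^ 2 = dot x x := by
  rw [eunorm, sq_sqrt (by positivity), dot]
  simp only [sq]

lemma eunorm_eq_sqrt_dot (x : Fin d → ℝ) : eunorm x = √(dot x x) := by
  rw [← eunorm_sq_s11, sqrt_sq (eunorm_nonneg x)]

lemma hasFDerivAt_dot_left (v x : Fin d → ℝ) :
    HasFDerivAt (fun y => dot y v) (dotCLM v) x := by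
  have h : (fun y => dot y v) = dotCLM v := funext fun y => (dotCLM_apply v y).symm
  exact h ▸ (dotCLM v).hasFDerivAt

lemma hasFDerivAt_eunorm {x : Fin d → ℝ} (hx : eunorm x ≠ 0) :
    HasFDerivAt eunorm ((eunorm x)⁻¹ • dotCLM x) x := by
  have hsq : HasFDerivAt (fun y => dot y y) ((2 : ℝ) • dotCLM x) x := by
    refine (HasFDerivAt.fun_sum (u := Finset.univ) (A := fun k (y : Fin d → ℝ) => y k * y k)
      fun k _ => (hasFDerivAt_apply k x).mul (hasFDerivAt_apply k x)).congr_fderiv ?_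
    ext w
    simp [dotCLM, Finset.mul_sum, two_mul]
  have hdot : dot x x ≠ 0 := by rwa [← eunorm_sq_s11, pow_ne_zero_iff two_ne_zero]
  have hroot : √(dot x x) ≠ 0 := by rwa [← eunorm_eq_sqrt_dot]
  rw [show (eunorm : (Fin d → ℝ) → ℝ) = fun y => √(dot y y) from funext eunorm_eq_sqrt_dot]
  refine (hsq.sqrt hdot).congr_fderiv ?_
  rw [smul_smul]
  congr 1
  field_simp

theorem divg_radial_field {α β : ℝ → ℝ} {α' β' : ℝ} (v : Fin d → ℝ) {x : Fin d → ℝ}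
    (hx : eunorm x ≠ 0) (hα : HasDerivAt α α' (eunorm x)) (hβ : HasDerivAt β β' (eunorm x)) :
    divg (fun y j => α (eunorm y) * v j + β (eunorm y) * dot y v * y j) x =
      dot x v * (α' / eunorm x + eunorm x * β' + (d + 1) * β (eunorm x)) := by
  set r := eunorm x
  have hN := hasFDerivAt_eunorm hx
  have hpd : ∀ j, pd j (fun y => α (eunorm y) * v j + β (eunorm y) * dot y v * y j) x =
      α' / r * (x j * v j) + β' / r * dot x v * (x j * x j) + β r * (x j * v j)
        + β r * dot x v := by
    intro j
    have hf : HasFDerivAt (fun y => α (eunorm y) * v j + β (eunorm y) * dot y v * y j) _ x :=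
      ((hα.comp_hasFDerivAt x hN).mul_const (v j)).add
        (((hβ.comp_hasFDerivAt x hN).mul (hasFDerivAt_dot_left v x)).mul (hasFDerivAt_apply j x))
    rw [pd, hf.fderiv]
    simp only [Pi.mul_apply, Function.comp_apply, smul_add, add_apply, smul_apply, dotCLM_apply,
      single_dot, smul_eq_mul, ContinuousLinearMap.proj_apply, Pi.single_eq_same, mul_one]
    ring
  rw [divg, Finset.sum_congr rfl fun j _ => hpd j]
  simp only [Finset.sum_add_distrib, ← Finset.mul_sum, Finset.sum_const, Finset.card_univ,
    Fintype.card_fin, nsmul_eq_mul]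
  rw [show ∑ j, x j * v j = dot x v from rfl, show ∑ j, x j * x j = r ^ 2 from (eunorm_sq_s11 x).symm]
  field_simp
  ring

end RadialFields

lemma hasDerivAt_cutoff {a b r : ℝ} (hr : r ∈ Set.Ioo a b) :
    HasDerivAt (cutoff a b) (6 * (r ^ 2 - (a + b) * r + a * b) / (b - a) ^ 3) r := by
  have hcubic := (((((hasDerivAt_pow 3 r).const_mul 2).fun_sub
    ((hasDerivAt_pow 2 r).const_mul (3 * (a + b)))).fun_add
      ((hasDerivAt_id' r).const_mul (6 * a * b))).add_const (b ^ 2 * (b - 3 * a))).div_const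
        ((b - a) ^ 3)
  refine (hcubic.congr_deriv (by push_cast; ring)).congr_of_eventuallyEq ?_
  filter_upwards [Ioo_mem_nhds hr.1 hr.2] with t ht
  rw [cutoff, if_neg (not_le.mpr ht.1), if_pos ht.2.le]

theorem div_truncated_stokeslet3d_general (μ : ℝ) (F : Fin 3 → ℝ)
    (a b : ℝ) (ha : 0 < a)
    (x : Fin 3 → ℝ) (hxa : a < eunorm x) (hxb : eunorm x < b) :
    divg (fun y j => cutoff a b (eunorm y) * udelta3 μ F y j) x =
      (3 * ((eunorm x) ^ 2 - (a + b) * eunorm x + a * b) /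
        (2 * π * μ * (b - a) ^ 3 * (eunorm x) ^ 2)) * dot x F := by
  set r := eunorm x with hr_def
  have hr : 0 < r := ha.trans hxa
  set C := 1 / (8 * π * μ)
  have hχ := hasDerivAt_cutoff ⟨hxa, hxb⟩
  have hα : HasDerivAt (fun t => C * cutoff a b t / t) _ r :=
    (hχ.const_mul C).div (hasDerivAt_id' r) hr.ne'
  have hβ : HasDerivAt (fun t => C * cutoff a b t / t ^ 3) _ r :=
    (hχ.const_mul C).div (hasDerivAt_pow 3 r) (pow_ne_zero 3 hr.ne')
  have hfield : (fun y j => cutoff a b (eunorm y) * udelta3 μ F y j) = fun y j =>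
      C * cutoff a b (eunorm y) / eunorm y * F j
        + C * cutoff a b (eunorm y) / eunorm y ^ 3 * dot y F * y j := by
    funext y j
    simp only [udelta3, C]
    ring
  rw [hfield, divg_radial_field F hr.ne' hα hβ, ← hr_def]
  have hba : b - a ≠ 0 := (sub_pos.mpr (hxa.trans hxb)).ne'
  simp only [C]
  field_simp
  ring

/-- Divergence of the truncated 3D Stokeslet velocity `u₀ = χ̃ u_δ` on the annulus
`a < |x| < b`. -/
theorem div_truncated_stokeslet3d (μ : ℝ) (hμ : 0 < μ) (F : Fin 3 → ℝ)
    (a b : ℝ) (ha : 0 < a) (hab : a < b)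
    (x : Fin 3 → ℝ) (hxa : a < eunorm x) (hxb : eunorm x < b) :
    divg (fun y j => cutoff a b (eunorm y) * udelta3 μ F y j) x =
      (3 * ((eunorm x) ^ 2 - (a + b) * eunorm x + a * b) /
        (2 * π * μ * (b - a) ^ 3 * (eunorm x) ^ 2)) * dot x F :=
  div_truncated_stokeslet3d_general μ F a b ha x hxa hxb
end
end
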